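/- The transformation r4 of the quantum degenerate Garnier system G(1,2,2) is a quantum canonical transformation: suppose x1 is a unit of R and t1 is a central unit of R, and define q1 = x1, p1 = −t2t1^{-1}·x1^{-2}y2 − 2x2x1^{-1}y2 − t1·x1^{-2} + 2α4·x1^{-1} + y1, q2 = x1^2x2 + t2t1^{-1}·x1, p2 = x1^{-2}y2. Then (q1, p1, q2, p2) again satisfy the canonical commutation relations: [q1,p1] = [q2,p2] = h and [q1,q2] = [p1,p2] = [q1,p2] = [q2,p1] = 0. -/

import Mathlib

/-!
The transformation `r4` factors into three elementary canonical transformations: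
shifting `p₁` by a function of `q₁` (here `-t₁ q₁⁻² + 2 α₄ q₁⁻¹`), the point transformation
`q₂ ↦ q₁² q₂`, `p₂ ↦ q₁⁻² p₂`, `p₁ ↦ p₁ - 2 q₁⁻¹ q₂ p₂`, and the linear shear
`q₂ ↦ q₂ + c q₁`, `p₁ ↦ p₁ - c p₂` with the central constant `c = t₂ t₁⁻¹`.
Each of them visibly preserves the canonical commutation relations, by the Leibniz rule
for commutators.
-/

namespace Ring

variable {R : Type*} [Ring R]

theorem lie_mul (a b c : R) : ⁅a, b * c⁆ = ⁅a, b⁆ * c + b * ⁅a, c⁆ := by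
  simp only [lie_def]; noncomm_ring

theorem mul_lie (a b c : R) : ⁅a * b, c⁆ = a * ⁅b, c⁆ + ⁅a, c⁆ * b := by
  simp only [lie_def]; noncomm_ring

theorem lie_units_inv (u : Rˣ) (a : R) : ⁅a, (↑u⁻¹ : R)⁆ = ↑u⁻¹ * ⁅(u : R), a⁆ * ↑u⁻¹ := by
  simp only [lie_def, mul_sub, sub_mul, ← mul_assoc, Units.inv_mul, one_mul]
  simp only [mul_assoc, Units.mul_inv, mul_one]

theorem sq_lie {x y h : R} (hxy : ⁅x, y⁆ = h) (hh : Commute h x) : ⁅x ^ 2, y⁆ = h * (2 * x) := by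
  rw [pow_two, mul_lie, hxy, ← hh.eq]
  noncomm_ring

end Ring

structure IsCanonical {R : Type*} [Ring R] (h q₁ p₁ q₂ p₂ : R) : Prop where
  lie_q₁_p₁ : ⁅q₁, p₁⁆ = h
  lie_q₂_p₂ : ⁅q₂, p₂⁆ = h
  lie_q₁_q₂ : ⁅q₁, q₂⁆ = 0
  lie_p₁_p₂ : ⁅p₁, p₂⁆ = 0
  lie_q₁_p₂ : ⁅q₁, p₂⁆ = 0
  lie_q₂_p₁ : ⁅q₂, p₁⁆ = 0

namespace IsCanonical

attribute [local instance] LieRing.ofAssociativeRing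

variable {R : Type*} [Ring R] {h q₁ p₁ q₂ p₂ : R}

theorem shift_p₁ (H : IsCanonical h q₁ p₁ q₂ p₂) {f : R} (h₁ : Commute q₁ f) (h₂ : Commute q₂ f)
    (h₃ : Commute p₂ f) : IsCanonical h q₁ (p₁ + f) q₂ p₂ :=
  { H with
    lie_q₁_p₁ := by rw [lie_add, H.lie_q₁_p₁, h₁.lie_eq, add_zero]
    lie_p₁_p₂ := by rw [add_lie, H.lie_p₁_p₂, h₃.symm.lie_eq, add_zero]
    lie_q₂_p₁ := by rw [lie_add, H.lie_q₂_p₁, h₂.lie_eq, add_zero] }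

theorem shear (H : IsCanonical h q₁ p₁ q₂ p₂) {c : R} (hc : ∀ r, Commute c r) :
    IsCanonical h q₁ (p₁ - c * p₂) (q₂ + c * q₁) p₂ := by
  have hc₁ (r : R) : ⁅c, r⁆ = 0 := (hc r).lie_eq
  have hc₂ (r : R) : ⁅r, c⁆ = 0 := (hc r).symm.lie_eq
  constructor <;>
  simp only [lie_sub, sub_lie, lie_add, add_lie, Ring.lie_mul, Ring.mul_lie, hc₁, hc₂, lie_self,
    H.lie_q₁_p₁, H.lie_q₂_p₂, H.lie_q₁_q₂, H.lie_p₁_p₂, H.lie_q₁_p₂, H.lie_q₂_p₁] <;>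
  noncomm_ring

/-- `du` stands for the derivative `u'(q₁)`, as `⁅u, p₁⁆ = ħ u'` expresses. -/
theorem scale_q₂ (H : IsCanonical h q₁ p₁ q₂ p₂) (hh : ∀ r, Commute h r) (u : Rˣ) {du : R}
    (hu₁ : Commute q₁ u) (hu₂ : Commute q₂ u) (hu₃ : Commute p₂ u)
    (hdu₁ : Commute q₁ du) (hdu₂ : Commute q₂ du) (hdu₃ : Commute p₂ du)
    (hdu : Commute (u : R) du) (hp : ⁅(u : R), p₁⁆ = h * du) :
    IsCanonical h q₁ (p₁ - du * ↑u⁻¹ * q₂ * p₂) (u * q₂) (↑u⁻¹ * p₂) := by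
  have hv₁ := hu₁.units_inv_right
  have hv₃ := hu₃.units_inv_right
  constructor <;>
  simp only [lie_sub, sub_lie, Ring.lie_mul, Ring.mul_lie, lie_self, Ring.lie_units_inv,
    H.lie_q₁_p₁, H.lie_q₂_p₂, H.lie_q₁_q₂, H.lie_p₁_p₂, H.lie_q₁_p₂, H.lie_q₂_p₁,
    hu₁.lie_eq, hu₂.symm.lie_eq, hu₃.symm.lie_eq, hdu₁.lie_eq, hdu₂.lie_eq,
    hdu₃.symm.lie_eq, hdu.lie_eq, hv₁.lie_eq, hv₃.symm.lie_eq, hp,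
    mul_zero, zero_mul, add_zero, zero_add, sub_zero, zero_sub]
  · rw [Units.inv_mul_cancel_left]
  · rw [← (hh (du * ↑u⁻¹)).eq]; noncomm_ring
  · rw [mul_assoc _ q₂, hu₂.left_comm, ← mul_assoc _ (u : R), mul_assoc du, Units.inv_mul, mul_one,
      ← (hh q₂).eq, ← mul_assoc, ← (hh du).eq, sub_self]

end IsCanonical

/-- The transformation r4 of the quantum degenerate Garnier system G(1,2,2) is a
quantum canonical transformation. -/
theorem quantum_garnier_G122_r4_canonical
    {R : Type*} [Ring R]
    (h α4 t1 t2 : R)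
    (hh : ∀ r : R, h * r = r * h)
    (hA4 : ∀ r : R, α4 * r = r * α4)
    (ht1 : ∀ r : R, t1 * r = r * t1)
    (ht2 : ∀ r : R, t2 * r = r * t2)
    (x1 y1 x2 y2 : R)
    (hx1y1 : x1 * y1 - y1 * x1 = h)
    (hx2y2 : x2 * y2 - y2 * x2 = h)
    (hx1x2 : x1 * x2 - x2 * x1 = 0)
    (hy1y2 : y1 * y2 - y2 * y1 = 0)
    (hx1y2 : x1 * y2 - y2 * x1 = 0)
    (hx2y1 : x2 * y1 - y1 * x2 = 0)
    (x1i : R) (hx1il : x1i * x1 = 1) (hx1ir : x1 * x1i = 1)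
    (t1i : R) (ht1il : t1i * t1 = 1) (ht1ir : t1 * t1i = 1)
    (q1 p1 q2 p2 : R)
    (hq1 : q1 = x1)
    (hp1 : p1 = -(t2 * t1i * x1i^2 * y2) - 2 * x2 * x1i * y2 - t1 * x1i^2
      + 2 * α4 * x1i + y1)
    (hq2 : q2 = x1^2 * x2 + t2 * t1i * x1)
    (hp2 : p2 = x1i^2 * y2) :
    q1 * p1 - p1 * q1 = h ∧ q2 * p2 - p2 * q2 = h ∧
    q1 * q2 - q2 * q1 = 0 ∧ p1 * p2 - p2 * p1 = 0 ∧
    q1 * p2 - p2 * q1 = 0 ∧ q2 * p1 - p1 * q2 = 0 := by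
  let X : Rˣ := ⟨x1, x1i, hx1ir, hx1il⟩
  let T : Rˣ := ⟨t1, t1i, ht1ir, ht1il⟩
  have H : IsCanonical h x1 y1 x2 y2 := ⟨hx1y1, hx2y2, hx1x2, hy1y2, hx1y2, hx2y1⟩
  have hx1 : Commute x1 x1 := .refl x1
  have hx2 : Commute x2 x1 := (sub_eq_zero.mp hx1x2).symm
  have hy2 : Commute y2 x1 := (sub_eq_zero.mp hx1y2).symm
  set f := -(t1 * x1i ^ 2) + 2 * α4 * x1i with hf_def
  have hf {r : R} (hr : Commute r x1) : Commute r f :=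
    have hr' : Commute r x1i := hr.units_inv_right (u := X)
    ((Commute.symm (ht1 r)).mul_right (hr'.pow_right 2)).neg_right.add_right
      (((Commute.ofNat_right r 2).mul_right (Commute.symm (hA4 r))).mul_right hr')
  have hdu {r : R} (hr : Commute r x1) : Commute r (2 * x1) :=
    (Commute.ofNat_right r 2).mul_right hr
  have hu {r : R} (hr : Commute r x1) : Commute r ↑(X ^ 2) := hr.pow_right 2
  have hc (r : R) : Commute (t2 * t1i) r :=
    Commute.mul_left (ht2 r) ((Commute.symm (ht1 r)).units_inv_right (u := T)).symm
  have H₁ := H.scale_q₂ hh (X ^ 2) (hu hx1) (hu hx2) (hu hy2) (hdu hx1) (hdu hx2) (hdu hy2)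
    (hu (hdu hx1).symm).symm (Ring.sq_lie H.lie_q₁_p₁ (hh x1))
  have H₂ := H₁.shift_p₁ (hf hx1) (hf ((hu hx1).symm.mul_left hx2))
    (hf ((hu hx1).units_inv_right.symm.mul_left hy2))
  have H₃ := H₂.shear hc
  have hx2x1i : Commute x2 x1i := hx2.units_inv_right (u := X)
  have hP₁ : y1 - 2 * x1 * x1i ^ 2 * x2 * y2 + f - t2 * t1i * (x1i ^ 2 * y2) = p1 := by
    rw [hp1, mul_assoc 2 x1, pow_two, ← mul_assoc x1, hx1ir, one_mul, mul_assoc 2 x1i,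
      ← hx2x1i.eq, hf_def]
    noncomm_ring
  rw [hq1, hq2, hp2, ← hP₁]
  -- `↑(X ^ 2)` and `↑(X ^ 2)⁻¹` unfold definitionally to `x1 ^ 2` and `x1i ^ 2`.
  exact ⟨H₃.lie_q₁_p₁, H₃.lie_q₂_p₂, H₃.lie_q₁_q₂, H₃.lie_p₁_p₂, H₃.lie_q₁_p₂, H₃.lie_q₂_p₁⟩
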